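/- The bracket defined by {a,b}=1−a², {a,c}=c², {a,d}=c(d−a), {b,c}=c(d+a), {b,d}=d²−1, {c,d}=−c² on ℝ[a,b,c,d]/(ad−bc−1) satisfies the Jacobi identity and annihilates ad−bc−1. -/

import Mathlib

open MvPolynomial

noncomputable section

abbrev R4 : Type := MvPolynomial (Fin 4) ℝ

/-- The biderivation determined by the matrix `Pm` of brackets of generators. -/
def pb (Pm : Fin 4 → Fin 4 → R4) (f g : R4) : R4 :=
  ∑ i : Fin 4, ∑ j : Fin 4, Pm i j * pderiv i f * pderiv j g

/-- Variables: `a = X 0, b = X 1, c = X 2, d = X 3`. -/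
def a : R4 := X 0
def b : R4 := X 1
def c : R4 := X 2
def d : R4 := X 3

/-- The N-type bracket matrix: `{a,b}=1−a²`, `{a,c}=c²`, `{a,d}=c(d−a)`, `{b,c}=c(d+a)`,
`{b,d}=d²−1`, `{c,d}=−c²`, extended antisymmetrically. -/
def PN : Fin 4 → Fin 4 → R4 :=
  ![ ![0, 1 - a^2, c^2, c * (d - a)],
     ![-(1 - a^2), 0, c * (d + a), d^2 - 1],
     ![-c^2, -(c * (d + a)), 0, -c^2],
     ![-(c * (d - a)), -(d^2 - 1), c^2, 0] ]

/- ### Auxiliary lemmas -/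

lemma pb_add_left (Pm : Fin 4 → Fin 4 → R4) (f g u : R4) :
    pb Pm (f + g) u = pb Pm f u + pb Pm g u := by
  simp [pb, map_add, add_mul, mul_add, Finset.sum_add_distrib]

lemma pb_add_right (Pm : Fin 4 → Fin 4 → R4) (u f g : R4) :
    pb Pm u (f + g) = pb Pm u f + pb Pm u g := by
  simp [pb, map_add, mul_add, Finset.sum_add_distrib]

lemma pb_neg_right (Pm : Fin 4 → Fin 4 → R4) (u f : R4) :
    pb Pm u (-f) = -pb Pm u f := by
  simp [pb, map_neg, mul_neg, Finset.sum_neg_distrib]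

lemma pb_zero_right (Pm : Fin 4 → Fin 4 → R4) (u : R4) : pb Pm u 0 = 0 := by
  simp [pb]

lemma pb_C_left (Pm : Fin 4 → Fin 4 → R4) (r : ℝ) (u : R4) : pb Pm (C r) u = 0 := by
  simp [pb, pderiv_C]

lemma pb_C_right (Pm : Fin 4 → Fin 4 → R4) (r : ℝ) (u : R4) : pb Pm u (C r) = 0 := by
  simp [pb, pderiv_C]

lemma pb_mul_left (Pm : Fin 4 → Fin 4 → R4) (f g u : R4) :
    pb Pm (f * g) u = f * pb Pm g u + g * pb Pm f u := by
  unfold pb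
  rw [Finset.mul_sum, Finset.mul_sum, ← Finset.sum_add_distrib]
  refine Finset.sum_congr rfl fun i _ => ?_
  rw [Finset.mul_sum, Finset.mul_sum, ← Finset.sum_add_distrib]
  refine Finset.sum_congr rfl fun j _ => ?_
  rw [pderiv_mul]; ring

lemma pb_mul_right (Pm : Fin 4 → Fin 4 → R4) (u f g : R4) :
    pb Pm u (f * g) = f * pb Pm u g + g * pb Pm u f := by
  unfold pb
  rw [Finset.mul_sum, Finset.mul_sum, ← Finset.sum_add_distrib]
  refine Finset.sum_congr rfl fun i _ => ?_
  rw [Finset.mul_sum, Finset.mul_sum, ← Finset.sum_add_distrib]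
  refine Finset.sum_congr rfl fun j _ => ?_
  rw [pderiv_mul]; ring

lemma PN_skew (i j : Fin 4) : PN j i = -PN i j := by
  fin_cases i <;> fin_cases j <;> simp [PN]

lemma pb_skew (f g : R4) : pb PN g f = -pb PN f g := by
  have e2 : pb PN f g = ∑ i : Fin 4, ∑ j : Fin 4, PN j i * pderiv j f * pderiv i g := by
    unfold pb; exact Finset.sum_comm
  have h : pb PN g f + pb PN f g = 0 := by
    rw [e2]
    unfold pb
    simp only [← Finset.sum_add_distrib]
    refine Finset.sum_eq_zero fun i _ => Finset.sum_eq_zero fun j _ => ?_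
    rw [PN_skew]; ring
  linear_combination h

lemma pbX (Pm : Fin 4 → Fin 4 → R4) (i : Fin 4) (u : R4) :
    pb Pm (X i) u = ∑ j : Fin 4, Pm i j * pderiv j u := by
  unfold pb
  rw [Finset.sum_eq_single i]
  · exact Finset.sum_congr rfl fun j _ => by rw [pderiv_X_self, mul_one]
  · intro p _ hp
    simp [pderiv_X_of_ne (Ne.symm hp)]
  · simp

lemma pbXX (p q : Fin 4) : pb PN (X p) (X q) = PN p q := by
  rw [pbX, Finset.sum_eq_single q]
  · rw [pderiv_X_self, mul_one]
  · intro r _ hr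
    simp [pderiv_X_of_ne (Ne.symm hr)]
  · simp

/-- The Jacobiator. -/
def Jc (f g h : R4) : R4 :=
  pb PN f (pb PN g h) + pb PN g (pb PN h f) + pb PN h (pb PN f g)

lemma Jc_cycl (f g h : R4) : Jc f g h = Jc h f g := by unfold Jc; ring

lemma Jc_swap (f g h : R4) : Jc g f h = -Jc f g h := by
  unfold Jc
  rw [pb_skew h f, pb_skew f g, pb_skew g h, pb_neg_right, pb_neg_right, pb_neg_right]
  ring

lemma Jc_C₁ (r : ℝ) (g h : R4) : Jc (C r) g h = 0 := by
  simp [Jc, pb_C_left, pb_C_right, pb_zero_right]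

lemma Jc_add₁ (f f' g h : R4) : Jc (f + f') g h = Jc f g h + Jc f' g h := by
  simp only [Jc, pb_add_left, pb_add_right]
  ring

lemma Jc_mul₁ (f f' g h : R4) : Jc (f * f') g h = f * Jc f' g h + f' * Jc f g h := by
  simp only [Jc, pb_mul_left, pb_mul_right, pb_add_right]
  linear_combination (pb PN h f) * pb_skew g f' + (pb PN h f') * pb_skew g f

set_option maxHeartbeats 1000000 in
lemma jacXXX (i j k : Fin 4) : Jc (X i) (X j) (X k) = 0 := by
  unfold Jc
  rw [pbXX, pbXX, pbXX, pbX, pbX, pbX]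
  fin_cases i <;> fin_cases j <;> fin_cases k <;>
    simp [PN, a, b, c, d, Fin.sum_univ_four, pderiv_mul, pderiv_pow, pderiv_one,
      map_sub, map_add, map_neg, map_one] <;>
    ring_nf

lemma jacXX (i j : Fin 4) (h : R4) : Jc (X i) (X j) h = 0 := by
  rw [Jc_cycl]
  induction h using MvPolynomial.induction_on with
  | C r => exact Jc_C₁ r _ _
  | add p q hp hq => rw [Jc_add₁, hp, hq, add_zero]
  | mul_X p n hp => rw [Jc_mul₁, hp, jacXXX n i j, mul_zero, mul_zero, add_zero]

lemma jacX (i : Fin 4) (g h : R4) : Jc (X i) g h = 0 := by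
  have hg : Jc g (X i) h = 0 := by
    induction g using MvPolynomial.induction_on with
    | C r => exact Jc_C₁ r _ _
    | add p q hp hq => rw [Jc_add₁, hp, hq, add_zero]
    | mul_X p n hp => rw [Jc_mul₁, hp, jacXX n i h, mul_zero, mul_zero, add_zero]
  rw [Jc_swap g (X i) h, hg, neg_zero]

lemma jacX_dead (i : Fin 4) (g h : R4) : Jc g (X i) h = 0 := by
  induction g using MvPolynomial.induction_on with
  | C r => exact Jc_C₁ r _ _
  | add p q hp hq => rw [Jc_add₁, hp, hq, add_zero]
  | mul_X p n hp => rw [Jc_mul₁, hp, jacXX n i h, mul_zero, mul_zero, add_zero]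

lemma jac (f g h : R4) : Jc f g h = 0 := by
  induction f using MvPolynomial.induction_on with
  | C r => exact Jc_C₁ r _ _
  | add p q hp hq => rw [Jc_add₁, hp, hq, add_zero]
  | mul_X p n hp => rw [Jc_mul₁, hp, jacX n g h, mul_zero, mul_zero, add_zero]

/-- The N-type bracket satisfies the Jacobi identity and annihilates `ad − bc − 1`:
the bracket of each generator with `ad − bc − 1` lies in the ideal `(ad − bc − 1)`. -/
theorem stmt_2 :
    (∀ f g h : R4,
      pb PN f (pb PN g h) + pb PN g (pb PN h f) + pb PN h (pb PN f g) = 0) ∧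
    (∀ i : Fin 4,
      pb PN (X i) (a * d - b * c - 1) ∈ Ideal.span {(a * d - b * c - 1 : R4)}) := by
  constructor
  · exact jac
  · intro i
    fin_cases i
    · refine Ideal.mem_span_singleton.mpr ⟨c, ?_⟩
      rw [pbX]
      simp [PN, a, b, c, d, Fin.sum_univ_four, pderiv_mul, pderiv_pow, pderiv_one,
        map_sub, map_add, map_neg, map_one, pderiv_C]
      try ring
    · refine Ideal.mem_span_singleton.mpr ⟨a + d, ?_⟩
      rw [pbX]
      simp [PN, a, b, c, d, Fin.sum_univ_four, pderiv_mul, pderiv_pow, pderiv_one,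
        map_sub, map_add, map_neg, map_one, pderiv_C]
      try ring
    · refine Ideal.mem_span_singleton.mpr ⟨0, ?_⟩
      rw [pbX]
      simp [PN, a, b, c, d, Fin.sum_univ_four, pderiv_mul, pderiv_pow, pderiv_one,
        map_sub, map_add, map_neg, map_one, pderiv_C]
      try ring
    · refine Ideal.mem_span_singleton.mpr ⟨c, ?_⟩
      rw [pbX]
      simp [PN, a, b, c, d, Fin.sum_univ_four, pderiv_mul, pderiv_pow, pderiv_one,
        map_sub, map_add, map_neg, map_one, pderiv_C]
      try ring
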